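/- Let 𝒢 be a finite mean-payoff parity game whose least priority p is odd, let T = V \ Attr₂(col⁻¹(p)), and let x ∈ ℝ. If some state q of 𝒢 has value ≥ x, then T ≠ ∅ and some state of the restricted game 𝒢↾T has value ≥ x. -/

import Mathlib

/-!
Fix a Player-1 strategy `σ` and let `M` be the largest value of a state of `𝒢↾T`. Player 2 answers
`σ` as follows: inside `Attr₂(col⁻¹(p))` she plays the attractor strategy, and whenever the play
enters `T` after a history `pre`, she copies a play of `𝒢↾T` that is consistent with `σ` continued
after `pre` (kept inside `T`) and has payoff below the value of `σ`, which exists if that value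
exceeds `M`. If the resulting play meets the attractor infinitely often, it sees the odd least
priority `p` infinitely often and has payoff `⊥`; otherwise it eventually coincides with one of the
copied plays, and the payoff is tail-invariant. Either way the value of `σ` is at most `M`; hence
`x ≤ M`, which forces `T ≠ ∅`, and `M` is attained because `T` is finite.
-/

open Filter

/-- A (weighted) game graph with priorities: states are partitioned between
Player 1 (`isP1`) and Player 2, `E` is the edge relation, `w` the edge weights
and `col` the priority function. -/
structure Game (V : Type) where
  isP1 : V → Prop
  E : V → V → Prop
  w : V → V → ℝ
  col : V → ℕ

variable {V : Type}

/-- An infinite play (infinite path in the graph). -/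
def IsPlay (G : Game V) (ρ : ℕ → V) : Prop := ∀ n, G.E (ρ n) (ρ (n + 1))

/-- The set of states occurring infinitely often. -/
def InfOcc (ρ : ℕ → V) : Set V := {v | ∃ᶠ n in atTop, ρ n = v}

/-- The average weight of the first `n` edges of `ρ`. -/
noncomputable def avgW (G : Game V) (ρ : ℕ → V) (n : ℕ) : ℝ :=
  (∑ i ∈ Finset.range n, G.w (ρ i) (ρ (i + 1))) / n

/-- A play is parity-winning if the minimal priority seen infinitely often is even. -/
def ParityWin (G : Game V) (ρ : ℕ → V) : Prop := Even (sInf (G.col '' InfOcc ρ))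

/-- The payoff of a play: the liminf of the average weights if the play is
parity-winning, and `-∞` otherwise. -/
noncomputable def payoff (G : Game V) (ρ : ℕ → V) : EReal :=
  haveI := Classical.dec (ParityWin G ρ)
  if ParityWin G ρ then Filter.liminf (fun n => ((avgW G ρ n : ℝ) : EReal)) atTop else ⊥

/-- A strategy of Player 1: given the past history and the current state
(controlled by Player 1), choose a successor. -/
structure Strat1 (G : Game V) where
  f : List V → V → V
  valid : ∀ h c, G.isP1 c → G.E c (f h c)

/-- A strategy of Player 2. -/
structure Strat2 (G : Game V) where
  f : List V → V → V
  valid : ∀ h c, ¬ G.isP1 c → G.E c (f h c)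

def Memoryless1 {G : Game V} (σ : Strat1 G) : Prop := ∀ h h' c, σ.f h c = σ.f h' c
def Memoryless2 {G : Game V} (τ : Strat2 G) : Prop := ∀ h h' c, τ.f h c = τ.f h' c

/-- A play is consistent with a strategy of Player 1. -/
def Consistent1 (G : Game V) (σ : Strat1 G) (ρ : ℕ → V) : Prop :=
  ∀ n, G.isP1 (ρ n) → ρ (n + 1) = σ.f (List.ofFn fun i : Fin n => ρ i) (ρ n)

/-- A play is consistent with a strategy of Player 2. -/
def Consistent2 (G : Game V) (τ : Strat2 G) (ρ : ℕ → V) : Prop :=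
  ∀ n, ¬ G.isP1 (ρ n) → ρ (n + 1) = τ.f (List.ofFn fun i : Fin n => ρ i) (ρ n)

/-- The value of a Player 1 strategy from `q₀`: the infimum of the payoffs of
consistent plays from `q₀`. -/
noncomputable def val1 (G : Game V) (σ : Strat1 G) (q₀ : V) : EReal :=
  ⨅ ρ : {ρ : ℕ → V // IsPlay G ρ ∧ ρ 0 = q₀ ∧ Consistent1 G σ ρ}, payoff G ρ.val

/-- The value of a Player 2 strategy from `q₀`. -/
noncomputable def val2 (G : Game V) (τ : Strat2 G) (q₀ : V) : EReal :=
  ⨆ ρ : {ρ : ℕ → V // IsPlay G ρ ∧ ρ 0 = q₀ ∧ Consistent2 G τ ρ}, payoff G ρ.val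

/-- The lower value of a state. -/
noncomputable def lowVal (G : Game V) (q₀ : V) : EReal := ⨆ σ : Strat1 G, val1 G σ q₀

/-- The upper value of a state. -/
noncomputable def upVal (G : Game V) (q₀ : V) : EReal := ⨅ τ : Strat2 G, val2 G τ q₀

/-- The Player 1 attractor of a set `S`: the states from which Player 1 can
force a visit to `S`. -/
inductive Attr1 (G : Game V) (S : Set V) : V → Prop
  | base {v} : v ∈ S → Attr1 G S v
  | p1 {v u} : G.isP1 v → G.E v u → Attr1 G S u → Attr1 G S v
  | p2 {v} : ¬ G.isP1 v → (∃ u, G.E v u) → (∀ u, G.E v u → Attr1 G S u) → Attr1 G S v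

/-- The Player 2 attractor of a set `S`. -/
inductive Attr2 (G : Game V) (S : Set V) : V → Prop
  | base {v} : v ∈ S → Attr2 G S v
  | p2 {v u} : ¬ G.isP1 v → G.E v u → Attr2 G S u → Attr2 G S v
  | p1 {v} : G.isP1 v → (∃ u, G.E v u) → (∀ u, G.E v u → Attr2 G S u) → Attr2 G S v

/-- The game restricted to a subarena `T`. -/
def Game.restrict (G : Game V) (T : Set V) : Game T where
  isP1 v := G.isP1 v.val
  E a b := G.E a.val b.val
  w a b := G.w a.val b.val
  col v := G.col v.val

open scoped Topology

namespace Game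

variable (G : Game V) (S : Set V)

def cpre2 (X : Set V) : Set V :=
  {v | (¬ G.isP1 v ∧ ∃ u, G.E v u ∧ u ∈ X) ∨ (G.isP1 v ∧ ∀ u, G.E v u → u ∈ X)}

def attr2Iter : ℕ → Set V
  | 0 => S
  | n + 1 => attr2Iter n ∪ G.cpre2 (attr2Iter n)

theorem attr2Iter_mono : Monotone (G.attr2Iter S) :=
  monotone_nat_of_le_succ fun _ _ hv => Or.inl hv

theorem attr2_of_mem_attr2Iter (hsucc : ∀ v, ∃ u, G.E v u) {n : ℕ} {v : V}
    (hv : v ∈ G.attr2Iter S n) : Attr2 G S v := by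
  induction n generalizing v with
  | zero => exact .base hv
  | succ n ih =>
    rcases hv with hv | ⟨h1, u, hu, hmem⟩ | ⟨h1, hall⟩
    · exact ih hv
    · exact .p2 h1 hu (ih hmem)
    · exact .p1 h1 (hsucc v) fun u hu => ih (hall u hu)

theorem exists_mem_attr2Iter [Finite V] {v : V} (hv : Attr2 G S v) :
    ∃ n, v ∈ G.attr2Iter S n := by
  induction hv with
  | base h => exact ⟨0, h⟩
  | p2 h1 hu _ ih =>
    obtain ⟨n, hn⟩ := ih
    exact ⟨n + 1, Or.inr (Or.inl ⟨h1, _, hu, hn⟩)⟩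
  | @p1 v h1 _ _ ih =>
    have hev : ∀ᶠ n in atTop, ∀ u, G.E v u → u ∈ G.attr2Iter S n :=
      eventually_all.2 fun u => by
        by_cases hu : G.E v u
        · obtain ⟨n, hn⟩ := ih u hu
          exact eventually_atTop.2 ⟨n, fun m hm _ => G.attr2Iter_mono S hm hn⟩
        · exact .of_forall fun _ hu' => absurd hu' hu
    obtain ⟨n, hn⟩ := hev.exists
    exact ⟨n + 1, Or.inr (Or.inr ⟨h1, hn⟩)⟩

open Classical in
/-- Moving into the earliest iterate that some successor reaches makes the iterate index drop at
every Player-2 step inside the attractor. -/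
noncomputable def attr2Move (hsucc : ∀ v, ∃ u, G.E v u) (v : V) : V :=
  if h : ∃ n u, G.E v u ∧ u ∈ G.attr2Iter S n then (Nat.find_spec h).choose
  else (hsucc v).choose

theorem attr2Move_edge (hsucc : ∀ v, ∃ u, G.E v u) (v : V) :
    G.E v (G.attr2Move S hsucc v) := by
  classical
  unfold attr2Move
  split_ifs with h
  · exact (Nat.find_spec h).choose_spec.1
  · exact (hsucc v).choose_spec

theorem attr2Move_mem (hsucc : ∀ v, ∃ u, G.E v u) {v u : V} {n : ℕ} (hu : G.E v u)
    (hn : u ∈ G.attr2Iter S n) : G.attr2Move S hsucc v ∈ G.attr2Iter S n := by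
  classical
  have h : ∃ n u, G.E v u ∧ u ∈ G.attr2Iter S n := ⟨n, u, hu, hn⟩
  unfold attr2Move
  rw [dif_pos h]
  exact G.attr2Iter_mono S (Nat.find_min' h ⟨u, hu, hn⟩) (Nat.find_spec h).choose_spec.2

theorem exists_mem_of_follows_attr2Move [Finite V] (hsucc : ∀ v, ∃ u, G.E v u) {ρ : ℕ → V}
    (hρ : IsPlay G ρ)
    (hmove : ∀ n, ¬ G.isP1 (ρ n) → Attr2 G S (ρ n) → ρ (n + 1) = G.attr2Move S hsucc (ρ n))
    {n : ℕ} (hn : Attr2 G S (ρ n)) : ∃ m ≥ n, ρ m ∈ S := by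
  obtain ⟨r, hr⟩ := G.exists_mem_attr2Iter S hn
  clear hn
  induction r generalizing n with
  | zero => exact ⟨n, le_rfl, hr⟩
  | succ r ih =>
    suffices ρ (n + 1) ∈ G.attr2Iter S r ∨ ρ n ∈ G.attr2Iter S r by
      rcases this with h | h
      · obtain ⟨m, hm, hS⟩ := ih h
        exact ⟨m, by omega, hS⟩
      · exact ih h
    rcases hr with hr | ⟨h1, u, hu, hmem⟩ | ⟨_, hall⟩
    · exact .inr hr
    · have hA : Attr2 G S (ρ n) :=
        G.attr2_of_mem_attr2Iter S hsucc (n := r + 1) (Or.inr (Or.inl ⟨h1, u, hu, hmem⟩))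
      rw [hmove n h1 hA]
      exact .inl (G.attr2Move_mem S hsucc hu hmem)
    · exact .inl (hall _ (hρ n))

def attr2Compl : Set V := {v | ¬ Attr2 G S v}

theorem exists_succ_mem_attr2Compl (hsucc : ∀ v, ∃ u, G.E v u) :
    ∀ v ∈ G.attr2Compl S, G.isP1 v → ∃ u ∈ G.attr2Compl S, G.E v u := by
  intro v hv h1
  by_contra! h
  exact hv (.p1 h1 (hsucc v) fun u hu => not_not.1 fun hu' => h u hu' hu)

end Game

theorem EReal.liminf_coe_eq_of_tendsto_sub {α : Type*} {f : Filter α} [f.NeBot] {u s : α → ℝ}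
    (h : Tendsto (fun n => u n - s n) f (𝓝 0)) :
    liminf (fun n => (u n : EReal)) f = liminf (fun n => (s n : EReal)) f := by
  suffices key : ∀ u s : α → ℝ, Tendsto (fun n => u n - s n) f (𝓝 0) →
      liminf (fun n => (s n : EReal)) f ≤ liminf (fun n => (u n : EReal)) f by
    refine le_antisymm (key s u ?_) (key u s h)
    simpa using h.neg
  intro u s h
  have h0 : liminf (fun n => ((u n - s n : ℝ) : EReal)) f = 0 :=
    (EReal.tendsto_coe.2 h).liminf_eq
  calc liminf (fun n => (s n : EReal)) f
      = liminf (fun n => (s n : EReal)) f + liminf (fun n => ((u n - s n : ℝ) : EReal)) f := by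
        rw [h0, add_zero]
    _ ≤ liminf ((fun n => (s n : EReal)) + fun n => ((u n - s n : ℝ) : EReal)) f :=
        EReal.le_liminf_add
    _ = liminf (fun n => (u n : EReal)) f := by
        congr 1
        funext n
        rw [Pi.add_apply, ← EReal.coe_add, add_sub_cancel]

theorem abs_sum_range_le {a : ℕ → ℝ} {W : ℝ} (ha : ∀ i, |a i| ≤ W) (n : ℕ) :
    |∑ i ∈ Finset.range n, a i| ≤ n * W :=
  calc |∑ i ∈ Finset.range n, a i| ≤ ∑ i ∈ Finset.range n, |a i| := Finset.abs_sum_le_sum_abs _ _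
    _ ≤ ∑ _i ∈ Finset.range n, W := Finset.sum_le_sum fun i _ => ha i
    _ = n * W := by simp

theorem tendsto_avg_add_sub_avg_shift {a : ℕ → ℝ} {W : ℝ} (ha : ∀ i, |a i| ≤ W) (N : ℕ) :
    Tendsto (fun n => (∑ i ∈ Finset.range (n + N), a i) / (n + N : ℕ) -
      (∑ i ∈ Finset.range n, a (N + i)) / n) atTop (𝓝 0) := by
  set D := ∑ i ∈ Finset.range N, a i
  set A : ℕ → ℝ := fun n => (∑ i ∈ Finset.range n, a (N + i)) / n
  have hD : |D| ≤ N * W := abs_sum_range_le ha N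
  refine squeeze_zero_norm' ?_ (tendsto_const_div_atTop_nhds_zero_nat (2 * N * W))
  filter_upwards [eventually_gt_atTop 0] with n hn
  have hn' : (0 : ℝ) < n := by exact_mod_cast hn
  have hdiff :
      (∑ i ∈ Finset.range (n + N), a i) / (n + N : ℕ) - A n = (D - N * A n) / (n + N) := by
    rw [add_comm n N, Finset.sum_range_add]
    simp only [A]
    push_cast
    field_simp
    ring
  have hAN : |D - N * A n| ≤ 2 * N * W := by
    have hA : |A n| ≤ W := by
      rw [abs_div, Nat.abs_cast, div_le_iff₀ hn', mul_comm]
      exact abs_sum_range_le (fun i => ha (N + i)) n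
    calc |D - N * A n| ≤ |D| + N * |A n| := by
          simpa [abs_mul] using abs_sub D (N * A n)
      _ ≤ N * W + N * W := by gcongr
      _ = 2 * N * W := by ring
  rw [Real.norm_eq_abs, hdiff, abs_div, abs_of_pos (by positivity : (0 : ℝ) < n + N)]
  calc |D - N * A n| / (n + N) ≤ 2 * N * W / (n + N) := by gcongr
    _ ≤ 2 * N * W / n := by
        gcongr
        · exact (abs_nonneg _).trans hAN
        · simp

theorem infOcc_shift (ρ : ℕ → V) (N : ℕ) : InfOcc (fun k => ρ (N + k)) = InfOcc ρ := by
  ext v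
  change (∃ᶠ k in atTop, ρ (N + k) = v) ↔ ∃ᶠ k in atTop, ρ k = v
  simp only [add_comm N]
  rw [← frequently_map (m := fun k => k + N) (P := fun n => ρ n = v),
    map_add_atTop_eq_nat]

theorem payoff_shift [Finite V] (G : Game V) (ρ : ℕ → V) (N : ℕ) :
    payoff G (fun k => ρ (N + k)) = payoff G ρ := by
  obtain ⟨W, hW⟩ := (Set.finite_range fun e : V × V => |G.w e.1 e.2|).bddAbove
  have hwin : ParityWin G (fun k => ρ (N + k)) ↔ ParityWin G ρ := by
    rw [ParityWin, ParityWin, infOcc_shift]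
  have hlim : liminf (fun n => (avgW G (fun k => ρ (N + k)) n : EReal)) atTop =
      liminf (fun n => (avgW G ρ n : EReal)) atTop := by
    rw [← liminf_nat_add (fun n => (avgW G ρ n : EReal)) N]
    refine (EReal.liminf_coe_eq_of_tendsto_sub ?_).symm
    exact tendsto_avg_add_sub_avg_shift (fun i => hW ⟨(ρ i, ρ (i + 1)), rfl⟩) N
  unfold payoff
  split_ifs <;> simp_all

theorem infOcc_val {T : Set V} (ρ : ℕ → T) :
    InfOcc (fun n => (ρ n).val) = Subtype.val '' InfOcc ρ := by
  ext w
  constructor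
  · intro h
    obtain ⟨n₀, hn₀⟩ := h.exists
    exact ⟨ρ n₀, h.mono fun n hn => Subtype.ext (hn.trans hn₀.symm), hn₀⟩
  · rintro ⟨v, hv, rfl⟩
    exact hv.mono fun n hn => congrArg Subtype.val hn

theorem payoff_restrict (G : Game V) (T : Set V) (ρ : ℕ → T) :
    payoff (G.restrict T) ρ = payoff G (fun n => (ρ n).val) := by
  have hwin : ParityWin (G.restrict T) ρ ↔ ParityWin G (fun n => (ρ n).val) := by
    rw [ParityWin, ParityWin, infOcc_val, Set.image_image]
    rfl
  unfold payoff
  split_ifs <;> simp_all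
  rfl

theorem payoff_eq_bot_of_frequently [Finite V] (G : Game V) {ρ : ℕ → V} {p : ℕ} (hp : Odd p)
    (hmin : ∀ v, p ≤ G.col v) (h : ∃ᶠ n in atTop, G.col (ρ n) = p) : payoff G ρ = ⊥ := by
  obtain ⟨v, hv⟩ : ∃ v, ∃ᶠ n in atTop, ρ n = v ∧ G.col v = p :=
    frequently_exists.1 (h.mono fun n hn => ⟨ρ n, rfl, hn⟩)
  have hvp : G.col v = p := hv.exists.choose_spec.2
  have hmin_inf : sInf (G.col '' InfOcc ρ) = p :=
    le_antisymm (Nat.sInf_le ⟨v, hv.mono fun _ => And.left, hvp⟩)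
      (le_csInf ⟨p, v, hv.mono fun _ => And.left, hvp⟩ (Set.forall_mem_image.2 fun u _ => hmin u))
  have hlose : ¬ ParityWin G ρ := by
    rw [ParityWin, hmin_inf, Nat.not_even_iff_odd]
    exact hp
  unfold payoff
  rw [if_neg hlose]

theorem List.rdropWhile_append_of_forall {α : Type*} {p : α → Bool} {l₁ l₂ : List α}
    (h₁ : l₁.rdropWhile p = l₁) (h₂ : ∀ x ∈ l₂, p x) : (l₁ ++ l₂).rdropWhile p = l₁ := by
  induction l₂ using List.reverseRecOn with
  | nil => simpa using h₁
  | append_singleton l x ih =>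
    rw [← List.append_assoc, List.rdropWhile_concat_pos p _ x (h₂ x (by simp))]
    exact ih fun y hy => h₂ y (by simp [hy])

theorem List.rtakeWhile_append_of_forall {α : Type*} {p : α → Bool} {l₁ l₂ : List α}
    (h₁ : l₁.rdropWhile p = l₁) (h₂ : ∀ x ∈ l₂, p x) : (l₁ ++ l₂).rtakeWhile p = l₂ := by
  have h := List.rdropWhile_append_rtakeWhile (p := p) (l := l₁ ++ l₂)
  rw [List.rdropWhile_append_of_forall h₁ h₂] at h
  exact List.append_cancel_left h

theorem List.headD_ofFn {α : Type*} (x : ℕ → α) (k : ℕ) :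
    (List.ofFn fun i : Fin k => x i).headD (x k) = x 0 := by
  cases k <;> simp

theorem Nat.exists_minimal_forall_ge {P : ℕ → Prop} (h : ∃ N, ∀ m ≥ N, P m) :
    ∃ N, (∀ m ≥ N, P m) ∧ ∀ n, n + 1 = N → ¬ P n := by
  classical
  refine ⟨Nat.find h, Nat.find_spec h, fun n hn hPn => Nat.find_min h (m := n) (by omega) ?_⟩
  intro m hm
  rcases hm.eq_or_lt with rfl | hlt
  · exact hPn
  · exact Nat.find_spec h m (by omega)

def unfoldPlay (next : List V → V → V) (q : V) : ℕ → V
  | 0 => q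
  | n + 1 => next (List.ofFn fun i : Fin n => unfoldPlay next q i) (unfoldPlay next q n)
decreasing_by all_goals omega

theorem unfoldPlay_zero (next : List V → V → V) (q : V) : unfoldPlay next q 0 = q := by
  rw [unfoldPlay]

theorem unfoldPlay_succ (next : List V → V → V) (q : V) (n : ℕ) :
    unfoldPlay next q (n + 1) =
      next (List.ofFn fun i : Fin n => unfoldPlay next q i) (unfoldPlay next q n) := by
  rw [unfoldPlay]

open Classical in
/-- `σ` continued after the history `pre`, redirected into `T` whenever it would leave `T`. -/
noncomputable def Strat1.restrict {G : Game V} (σ : Strat1 G) {T : Set V}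
    (hT : ∀ v ∈ T, G.isP1 v → ∃ u ∈ T, G.E v u) (pre : List V) : Strat1 (G.restrict T) where
  f h c :=
    if hσ : σ.f (pre ++ h.map Subtype.val) c ∈ T then ⟨_, hσ⟩
    else if h1 : G.isP1 c then ⟨_, (hT c c.2 h1).choose_spec.1⟩ else c
  valid h c h1 := by
    dsimp only [Game.restrict]
    split_ifs
    · exact σ.valid _ _ h1
    · exact (hT c c.2 h1).choose_spec.2
    · exact absurd h1 ‹_›

theorem Strat1.restrict_f_of_mem {G : Game V} (σ : Strat1 G) {T : Set V}
    (hT : ∀ v ∈ T, G.isP1 v → ∃ u ∈ T, G.E v u) {pre : List V} {h : List T} {c : T}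
    (hσ : σ.f (pre ++ h.map Subtype.val) c ∈ T) :
    ((σ.restrict hT pre).f h c).val = σ.f (pre ++ h.map Subtype.val) c := by
  unfold Strat1.restrict
  dsimp only
  rw [dif_pos hσ]

namespace Game

variable (G : Game V) (S : Set V) (hsucc : ∀ v, ∃ u, G.E v u) (σ : Strat1 G)
  (guide : List V → G.attr2Compl S → ℕ → G.attr2Compl S)

open Classical in
/-- If the history `h` ends with a block of `k` states outside the attractor, which started at
`v` (read `v = c` when `k = 0`) after the prefix `pre`, this is the state `guide pre v (k + 1)`. -/
noncomputable def guideTarget (h : List V) (c : V) : V :=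
  let blk := h.rtakeWhile fun v => decide (v ∈ G.attr2Compl S)
  if hv : blk.headD c ∈ G.attr2Compl S then
    (guide (h.rdropWhile fun v => decide (v ∈ G.attr2Compl S)) ⟨_, hv⟩ (blk.length + 1)).val
  else c

open Classical in
/-- The edge test only makes every move legal: on the plays that matter the target is a successor. -/
noncomputable def counterNext (h : List V) (c : V) : V :=
  if G.isP1 c then σ.f h c
  else if Attr2 G S c ∨ ¬ G.E c (G.guideTarget S guide h c) then G.attr2Move S hsucc c
  else G.guideTarget S guide h c

theorem counterNext_edge (h : List V) (c : V) : G.E c (G.counterNext S hsucc σ guide h c) := by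
  unfold counterNext
  split_ifs with h1 h2
  · exact σ.valid h c h1
  · exact G.attr2Move_edge S hsucc c
  · exact not_not.1 (not_or.1 h2).2

theorem guideTarget_append {pre : List V}
    (hpre : ∀ hne : pre ≠ [], pre.getLast hne ∉ G.attr2Compl S) (x : ℕ → G.attr2Compl S) (k : ℕ) :
    G.guideTarget S guide (pre ++ List.ofFn fun i : Fin k => (x i).val) (x k) =
      (guide pre (x 0) (k + 1)).val := by
  classical
  have hdrop : pre.rdropWhile (fun v => decide (v ∈ G.attr2Compl S)) = pre :=
    List.rdropWhile_eq_self_iff.2 fun hne => by simpa using hpre hne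
  have hblk : ∀ y ∈ List.ofFn (fun i : Fin k => (x i).val),
      decide (y ∈ G.attr2Compl S) = true := by
    simp only [List.mem_ofFn, decide_eq_true_eq]
    rintro _ ⟨i, rfl⟩
    exact (x i).2
  unfold guideTarget
  simp only [List.rdropWhile_append_of_forall hdrop hblk,
    List.rtakeWhile_append_of_forall hdrop hblk, List.length_ofFn,
    List.headD_ofFn (fun i => (x i).val), Subtype.coe_prop, dif_pos]

theorem counterplay_tail {ρ : ℕ → V}
    (hstep : ∀ n, ρ (n + 1) = G.counterNext S hsucc σ guide (List.ofFn fun i : Fin n => ρ i) (ρ n))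
    (hguide : ∀ pre v, IsPlay (G.restrict (G.attr2Compl S)) (guide pre v) ∧ guide pre v 0 = v ∧
      Consistent1 (G.restrict (G.attr2Compl S))
        (σ.restrict (G.exists_succ_mem_attr2Compl S hsucc) pre) (guide pre v))
    {N : ℕ} (hN : ∀ m ≥ N, ρ m ∈ G.attr2Compl S) (hentry : ∀ n, n + 1 = N → ρ n ∉ G.attr2Compl S)
    (k : ℕ) : ρ (N + k) = (guide (List.ofFn fun i : Fin N => ρ i) ⟨ρ N, hN N le_rfl⟩ k).val := by
  set pre := List.ofFn fun i : Fin N => ρ i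
  obtain ⟨hgplay, hg0, hgcons⟩ := hguide pre ⟨ρ N, hN N le_rfl⟩
  set g := guide pre ⟨ρ N, hN N le_rfl⟩
  have hpre : ∀ hne : pre ≠ [], pre.getLast hne ∉ G.attr2Compl S := fun hne => by
    have hN0 : N ≠ 0 := by
      rintro rfl
      exact hne rfl
    rw [List.getLast_ofFn]
    exact hentry _ (by simp only; omega)
  induction k using Nat.strong_induction_on with
  | _ k ih =>
  rcases k with _ | k
  · simp [g, hg0]
  have hprev : ∀ i ≤ k, ρ (N + i) = (g i).val := fun i hi => ih i (by omega)
  have hhist : (List.ofFn fun i : Fin (N + k) => ρ i) =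
      pre ++ List.ofFn fun i : Fin k => (g i).val := by
    rw [List.ofFn_add]
    congr 2 with i
    exact hprev i i.isLt.le
  have hnext : ρ (N + (k + 1)) =
      G.counterNext S hsucc σ guide (pre ++ List.ofFn fun i : Fin k => (g i).val) (g k) := by
    rw [← hprev k le_rfl, ← hhist]
    exact hstep (N + k)
  by_cases h1 : G.isP1 (g k)
  · have hval : List.map Subtype.val (List.ofFn fun i : Fin k => g i) =
        List.ofFn fun i : Fin k => (g i).val := by
      rw [List.map_ofFn]
      rfl
    have hσ : σ.f (pre ++ List.map Subtype.val (List.ofFn fun i : Fin k => g i)) (g k) ∈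
        G.attr2Compl S := by
      have := hN (N + (k + 1)) (by omega)
      rwa [hnext, counterNext, if_pos h1, ← hval] at this
    rw [hnext, counterNext, if_pos h1, hgcons k h1, Strat1.restrict_f_of_mem _ _ hσ, hval]
  · have htarget : G.guideTarget S guide (pre ++ List.ofFn fun i : Fin k => (g i).val) (g k) =
        (g (k + 1)).val := by
      rw [G.guideTarget_append S guide hpre g k, hg0]
    rw [hnext, counterNext, if_neg h1, htarget, if_neg]
    push Not
    exact ⟨(g k).2, hgplay k⟩

theorem exists_play_frequently_mem_or_payoff_lt [Finite V] (q : V) {c : EReal}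
    (hc : ∀ pre (v : G.attr2Compl S), val1 (G.restrict (G.attr2Compl S))
      (σ.restrict (G.exists_succ_mem_attr2Compl S hsucc) pre) v < c) :
    ∃ ρ, IsPlay G ρ ∧ ρ 0 = q ∧ Consistent1 G σ ρ ∧
      ((∃ᶠ n in atTop, ρ n ∈ S) ∨ payoff G ρ < c) := by
  choose bad hbad using fun pre v => iInf_lt_iff.1 (hc pre v)
  set guide := fun pre v => (bad pre v).val
  set ρ := unfoldPlay (G.counterNext S hsucc σ guide) q
  have hstep : ∀ n, ρ (n + 1) =
      G.counterNext S hsucc σ guide (List.ofFn fun i : Fin n => ρ i) (ρ n) :=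
    unfoldPlay_succ _ q
  have hplay : IsPlay G ρ := fun n => by
    rw [hstep]
    exact G.counterNext_edge S hsucc σ guide _ _
  refine ⟨ρ, hplay, unfoldPlay_zero _ q, fun n h1 => by rw [hstep, counterNext, if_pos h1], ?_⟩
  by_cases hfreq : ∃ᶠ n in atTop, Attr2 G S (ρ n)
  · left
    refine frequently_atTop.2 fun a => ?_
    obtain ⟨b, hab, hb⟩ := frequently_atTop.1 hfreq a
    obtain ⟨m, hbm, hm⟩ := G.exists_mem_of_follows_attr2Move S hsucc hplay
      (fun n h1 hA => by rw [hstep, counterNext, if_neg h1, if_pos (Or.inl hA)]) hb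
    exact ⟨m, hab.trans hbm, hm⟩
  · right
    obtain ⟨N, hN, hentry⟩ :=
      Nat.exists_minimal_forall_ge (eventually_atTop.1 (not_frequently.1 hfreq))
    have htail := G.counterplay_tail S hsucc σ guide hstep (fun pre v => (bad pre v).2) hN hentry
    rw [← payoff_shift G ρ N, funext htail, ← payoff_restrict]
    exact hbad _ _

end Game

theorem Game.val1_le_iSup_lowVal_restrict [Finite V] (G : Game V) (hsucc : ∀ v, ∃ u, G.E v u)
    {p : ℕ} (hp : Odd p) (hmin : ∀ v, p ≤ G.col v)
    (σ : Strat1 G) (q : V) :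
    val1 G σ q ≤ ⨆ v : G.attr2Compl {u | G.col u = p},
      lowVal (G.restrict (G.attr2Compl {u | G.col u = p})) v := by
  by_contra! hlt
  obtain ⟨ρ, hplay, hρ0, hcons, hρ⟩ := G.exists_play_frequently_mem_or_payoff_lt _ hsucc σ q
    fun pre v => (le_iSup_of_le v (le_iSup (fun τ => val1 _ τ v) _)).trans_lt hlt
  have hle : val1 G σ q ≤ payoff G ρ := iInf_le_of_le ⟨ρ, hplay, hρ0, hcons⟩ le_rfl
  rcases hρ with hS | hlow
  · rw [payoff_eq_bot_of_frequently G hp hmin hS] at hle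
    exact not_lt_bot (hlt.trans_le hle)
  · exact hle.not_gt hlow

theorem mpp_odd_lemma_general {V : Type} [Fintype V] (G : Game V)
    (hsucc : ∀ v, ∃ u, G.E v u) (p : ℕ) (hp : Odd p)
    (hmin : ∀ v, p ≤ G.col v) (x : ℝ)
    (T : Set V) (hT : T = {v | ¬ Attr2 G {u | G.col u = p} v})
    (hq : ∃ q, (x : EReal) ≤ lowVal G q) :
    T.Nonempty ∧ ∃ q : T, (x : EReal) ≤ lowVal (G.restrict T) q := by
  subst hT
  obtain ⟨q, hq⟩ := hq
  have hx : (x : EReal) ≤ ⨆ v : G.attr2Compl {u | G.col u = p},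
      lowVal (G.restrict (G.attr2Compl {u | G.col u = p})) v :=
    hq.trans (iSup_le fun σ => G.val1_le_iSup_lowVal_restrict hsucc hp hmin σ q)
  have hne : Nonempty (G.attr2Compl {u | G.col u = p}) := by
    by_contra hempty
    rw [not_nonempty_iff] at hempty
    rw [iSup_of_empty] at hx
    exact EReal.coe_ne_bot x (le_bot_iff.1 hx)
  obtain ⟨v, hv⟩ := Finite.exists_max fun v : G.attr2Compl {u | G.col u = p} =>
    lowVal (G.restrict (G.attr2Compl {u | G.col u = p})) v
  exact ⟨Set.nonempty_coe_sort.1 hne, v, hx.trans (iSup_le hv)⟩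

/-- Lemma, odd case: least priority p odd,
T = V \ Attr₂(col⁻¹(p)). If some state of 𝒢 has value ≥ x, then T ≠ ∅ and some
state of 𝒢↾T has value ≥ x. -/
theorem mpp_odd_lemma {V : Type} [Fintype V] (G : Game V)
    (hsucc : ∀ v, ∃ u, G.E v u) (p : ℕ) (hp : Odd p)
    (hmin : ∀ v, p ≤ G.col v) (hex : ∃ v, G.col v = p) (x : ℝ)
    (T : Set V) (hT : T = {v | ¬ Attr2 G {u | G.col u = p} v})
    (hq : ∃ q, (x : EReal) ≤ lowVal G q) :
    T.Nonempty ∧ ∃ q : T, (x : EReal) ≤ lowVal (G.restrict T) q :=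
  mpp_odd_lemma_general G hsucc p hp hmin x T hT hq
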